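/- For any graphs G and H, γ_R(G □ H) ≥ γ_R(G)·γ_R(H)/3. -/

import Mathlib

open Finset

/-- A set `S` is a dominating set of `G` if every vertex outside `S` has a neighbor in `S`. -/
def IsDominatingSet {V : Type*} (G : SimpleGraph V) (S : Set V) : Prop :=
  ∀ v, v ∉ S → ∃ u ∈ S, G.Adj u v

/-- The domination number `γ(G)`. -/
noncomputable def domNum {V : Type*} [Fintype V] (G : SimpleGraph V) : ℕ :=
  sInf {n | ∃ S : Finset V, IsDominatingSet G ↑S ∧ S.card = n}

/-- A Roman dominating function: values in {0,1,2}, every vertex of value 0 has a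
neighbor of value 2. -/
def IsRDF {V : Type*} (G : SimpleGraph V) (f : V → ℕ) : Prop :=
  (∀ v, f v ≤ 2) ∧ ∀ v, f v = 0 → ∃ u, G.Adj u v ∧ f u = 2

/-- The Roman domination number `γ_R(G)`. -/
noncomputable def romanDomNum {V : Type*} [Fintype V] (G : SimpleGraph V) : ℕ :=
  sInf {n | ∃ f : V → ℕ, IsRDF G f ∧ ∑ v, f v = n}

/-- The strong product of graphs. -/
def strongProd {V W : Type*} (G : SimpleGraph V) (H : SimpleGraph W) :
    SimpleGraph (V × W) where
  Adj x y := x ≠ y ∧ (x.1 = y.1 ∨ G.Adj x.1 y.1) ∧ (x.2 = y.2 ∨ H.Adj x.2 y.2)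
  symm := ⟨fun x y => by
    rintro ⟨h, h1, h2⟩
    refine ⟨h.symm, ?_, ?_⟩
    · cases h1 with
      | inl h => exact Or.inl h.symm
      | inr h => exact Or.inr h.symm
    · cases h2 with
      | inl h => exact Or.inl h.symm
      | inr h => exact Or.inr h.symm⟩
  loopless := ⟨fun x => by simp⟩

/-- `G` has an efficient dominating set: a dominating set whose elements have
pairwise disjoint closed neighborhoods. -/
def HasEfficientDomSet {V : Type*} (G : SimpleGraph V) : Prop :=
  ∃ S : Finset V, IsDominatingSet G ↑S ∧
    ∀ u ∈ S, ∀ v ∈ S, u ≠ v →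
      Disjoint (insert u (G.neighborSet u)) (insert v (G.neighborSet v))

/-!
Fix a minimum Roman dominating function `f` of `G □ H`, of weight `w`, and a minimum dominating
set `U` of `G`; every vertex `g` of `G` is assigned a dominator `p g ∈ U`. For `u ∈ U`, summing
`f` over each cell `p⁻¹(u) × {h}` and capping at `2` gives a function on `H` that is Roman
dominating except at "void" cells (weight `0`, no `2` along `H`), so `|U| γ_R(H) ≤ w + B`
where `B` counts void cells.
In a row `V × {h}`, the vertices of void cells are defended by `2`s of that row, so replacing the
void dominators by those `2`s is again a dominating set of `G`; by minimality of `U`, the row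
has at least as many `2`s as void cells, whence `2B ≤ w`. Together with `γ_R(G) ≤ 2|U|` this
gives `γ_R(G) γ_R(H) ≤ 2(w + B) ≤ 3w`.
-/

open scoped Classical

section Extremal

variable {V : Type*} [Fintype V] {G : SimpleGraph V}

theorem romanDomNum_le_sum {f : V → ℕ} (hf : IsRDF G f) : romanDomNum G ≤ ∑ v, f v :=
  Nat.sInf_le ⟨f, hf, rfl⟩

theorem exists_isRDF_sum_eq_romanDomNum (G : SimpleGraph V) :
    ∃ f : V → ℕ, IsRDF G f ∧ ∑ v, f v = romanDomNum G :=
  Nat.sInf_mem (s := {n | ∃ f : V → ℕ, IsRDF G f ∧ ∑ v, f v = n})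
    ⟨_, fun _ => 1, ⟨fun _ => one_le_two, fun _ h => absurd h one_ne_zero⟩, rfl⟩

theorem domNum_le_card {S : Finset V} (hS : IsDominatingSet G S) : domNum G ≤ #S :=
  Nat.sInf_le ⟨S, hS, rfl⟩

theorem exists_isDominatingSet_card_eq_domNum (G : SimpleGraph V) :
    ∃ S : Finset V, IsDominatingSet G S ∧ #S = domNum G :=
  Nat.sInf_mem (s := {n | ∃ S : Finset V, IsDominatingSet G S ∧ #S = n})
    ⟨_, univ, fun v hv => absurd (mem_coe.2 (mem_univ v)) hv, rfl⟩

theorem IsDominatingSet.romanDomNum_le_two_mul_card {S : Finset V} (hS : IsDominatingSet G S) :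
    romanDomNum G ≤ 2 * #S := by
  have hRDF : IsRDF G (fun v => if v ∈ S then 2 else 0) := by
    refine ⟨fun v => by dsimp only; split <;> omega, fun v hv => ?_⟩
    have hvS : v ∉ (S : Set V) := fun hvS => by simp_all
    obtain ⟨u, hu, hadj⟩ := hS v hvS
    exact ⟨u, hadj, if_pos hu⟩
  calc romanDomNum G ≤ ∑ v, if v ∈ S then 2 else 0 := romanDomNum_le_sum hRDF
    _ = 2 * #S := by rw [sum_ite_mem, univ_inter, sum_const, smul_eq_mul, mul_comm]

end Extremal

theorem Finset.mul_card_filter_eq_le_sum {α : Type*} (s : Finset α) (φ : α → ℕ) (n : ℕ) :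
    n * #{a ∈ s | φ a = n} ≤ ∑ a ∈ s, φ a :=
  calc n * #{a ∈ s | φ a = n} = ∑ a ∈ s with φ a = n, φ a := by
        rw [sum_congr rfl fun a ha => (mem_filter.1 ha).2, sum_const, smul_eq_mul, mul_comm]
    _ ≤ ∑ a ∈ s, φ a := sum_le_sum_of_subset (filter_subset _ _)

theorem IsDominatingSet.exists_dominator {V : Type*} {G : SimpleGraph V} {S : Set V}
    (hS : IsDominatingSet G S) : ∃ p : V → V, (∀ v, p v ∈ S) ∧ ∀ v, p v = v ∨ G.Adj (p v) v := by
  have (v : V) : ∃ u ∈ S, u = v ∨ G.Adj u v := by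
    by_cases hv : v ∈ S
    · exact ⟨v, hv, .inl rfl⟩
    · obtain ⟨u, hu, hadj⟩ := hS v hv
      exact ⟨u, hu, .inr hadj⟩
  choose p hpS hp using this
  exact ⟨p, hpS, hp⟩

noncomputable section Cells

variable {V W : Type*} [Fintype V]

def cellWeight (f : V × W → ℕ) (p : V → V) (u : V) (h : W) : ℕ :=
  ∑ g with p g = u, f (g, h)

/-- If `f` is Roman dominating, every vertex of a void cell `p⁻¹(u) × {h}` is defended by a `2`
in the row `V × {h}`. -/
def IsVoidCell (H : SimpleGraph W) (f : V × W → ℕ) (p : V → V) (u : V) (h : W) : Prop :=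
  ∀ g, p g = u → f (g, h) = 0 ∧ ∀ h', H.Adj h h' → f (g, h') ≠ 2

def tubeProj (H : SimpleGraph W) (f : V × W → ℕ) (p : V → V) (u : V) (h : W) : ℕ :=
  min 2 (cellWeight f p u h) + if IsVoidCell H f p u h then 1 else 0

variable {G : SimpleGraph V} {H : SimpleGraph W} {f : V × W → ℕ} {p : V → V} {U : Finset V}
  {u : V} {h : W}

theorem IsVoidCell.cellWeight_eq_zero (hvoid : IsVoidCell H f p u h) : cellWeight f p u h = 0 :=
  sum_eq_zero fun g hg => (hvoid g (mem_filter.1 hg).2).1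

theorem le_cellWeight {g : V} (hg : p g = u) : f (g, h) ≤ cellWeight f p u h :=
  single_le_sum (f := fun g => f (g, h)) (fun _ _ => Nat.zero_le _) (mem_filter.2 ⟨mem_univ g, hg⟩)

theorem isRDF_tubeProj : IsRDF H (tubeProj H f p u) := by
  refine ⟨fun h => ?_, fun h hzero => ?_⟩
  · unfold tubeProj
    split_ifs with hvoid
    · simp [hvoid.cellWeight_eq_zero]
    · simp
  · have hvoid : ¬ IsVoidCell H f p u h := fun hvoid => by simp [tubeProj, hvoid] at hzero
    have hcell : cellWeight f p u h = 0 := by simpa [tubeProj, hvoid] using hzero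
    obtain ⟨g, hg, hng⟩ : ∃ g, p g = u ∧ (f (g, h) = 0 → ∃ h', H.Adj h h' ∧ f (g, h') = 2) := by
      simpa [IsVoidCell] using hvoid
    obtain ⟨h', hadj, hf2⟩ :=
      hng (Nat.eq_zero_of_le_zero ((le_cellWeight (f := f) (h := h) hg).trans hcell.le))
    have hcell' : 2 ≤ cellWeight f p u h' := hf2 ▸ le_cellWeight hg
    have hvoid' : ¬ IsVoidCell H f p u h' := fun hvoid' => by simp [(hvoid' g hg).1] at hf2
    refine ⟨h', hadj.symm, ?_⟩
    simp [tubeProj, hvoid', min_eq_left hcell']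

theorem romanDomNum_le_sum_cellWeight_add_card_void [Fintype W] :
    romanDomNum H ≤ ∑ h, cellWeight f p u h + #{h | IsVoidCell H f p u h} := by
  rw [card_filter, ← sum_add_distrib]
  exact (romanDomNum_le_sum isRDF_tubeProj).trans
    (sum_le_sum fun h _ => Nat.add_le_add_right (min_le_right _ _) _)

theorem sum_sum_cellWeight [Fintype W] (hpU : ∀ g, p g ∈ U) :
    ∑ u ∈ U, ∑ h, cellWeight f p u h = ∑ x, f x := by
  simp only [cellWeight]
  rw [sum_congr rfl fun u _ => sum_comm, sum_fiberwise_of_maps_to (fun g _ => hpU g)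
    (fun g => ∑ h, f (g, h)), ← Fintype.sum_prod_type]

theorem card_void_le_card_two (hf : IsRDF (G □ H) f) (hU : #U = domNum G) (hpU : ∀ g, p g ∈ U)
    (hp : ∀ g, p g = g ∨ G.Adj (p g) g) (h : W) :
    #{u ∈ U | IsVoidCell H f p u h} ≤ #{g | f (g, h) = 2} := by
  set X := {u ∈ U | IsVoidCell H f p u h}
  set T : Finset V := {g | f (g, h) = 2}
  have hdom : IsDominatingSet G ↑(U \ X ∪ T) := by
    intro v hv
    by_cases hvoid : IsVoidCell H f p (p v) h
    · obtain ⟨⟨a, b⟩, hadj, hfab⟩ := hf.2 (v, h) (hvoid v rfl).1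
      rcases SimpleGraph.boxProd_adj.1 hadj with ⟨hGa, hbh⟩ | ⟨hHb, hav⟩
      · dsimp only at hGa hbh
        subst hbh
        exact ⟨a, by simp [T, hfab], hGa⟩
      · dsimp only at hHb hav
        subst hav
        exact absurd hfab ((hvoid a rfl).2 b hHb.symm)
    · have hmem : p v ∈ U \ X ∪ T := by simp [X, hpU v, hvoid]
      rcases hp v with hpv | hadj
      · exact absurd (mem_coe.2 (hpv ▸ hmem)) hv
      · exact ⟨p v, hmem, hadj⟩
  have hXU : X ⊆ U := filter_subset _ _
  have hmin := (domNum_le_card hdom).trans (card_union_le _ _)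
  rw [card_sdiff_of_subset hXU] at hmin
  have := card_le_card hXU
  omega

theorem two_mul_sum_card_void_le [Fintype W] (hf : IsRDF (G □ H) f) (hU : #U = domNum G)
    (hpU : ∀ g, p g ∈ U) (hp : ∀ g, p g = g ∨ G.Adj (p g) g) :
    2 * ∑ u ∈ U, #{h | IsVoidCell H f p u h} ≤ ∑ x, f x :=
  calc 2 * ∑ u ∈ U, #{h | IsVoidCell H f p u h} = ∑ h, 2 * #{u ∈ U | IsVoidCell H f p u h} := by
        simp only [card_filter, ← mul_sum]
        rw [sum_comm]
    _ ≤ ∑ h, 2 * #{g | f (g, h) = 2} :=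
        sum_le_sum fun h _ => Nat.mul_le_mul_left 2 (card_void_le_card_two hf hU hpU hp h)
    _ ≤ ∑ h, ∑ g, f (g, h) := sum_le_sum fun h _ => univ.mul_card_filter_eq_le_sum _ 2
    _ = ∑ x, f x := by rw [Fintype.sum_prod_type, sum_comm]

end Cells

theorem romanDomNum_mul_le {V W : Type*} [Fintype V] [Fintype W]
    (G : SimpleGraph V) (H : SimpleGraph W) :
    romanDomNum G * romanDomNum H ≤ 3 * romanDomNum (G □ H) := by
  obtain ⟨f, hf, hfw⟩ := exists_isRDF_sum_eq_romanDomNum (G □ H)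
  obtain ⟨U, hUdom, hU⟩ := exists_isDominatingSet_card_eq_domNum G
  obtain ⟨p, hpU, hp⟩ := hUdom.exists_dominator
  set B := ∑ u ∈ U, #{h | IsVoidCell H f p u h}
  have htubes : #U * romanDomNum H ≤ romanDomNum (G □ H) + B :=
    calc #U * romanDomNum H = ∑ u ∈ U, romanDomNum H := by rw [sum_const, smul_eq_mul]
      _ ≤ ∑ u ∈ U, (∑ h, cellWeight f p u h + #{h | IsVoidCell H f p u h}) :=
          sum_le_sum fun u _ => romanDomNum_le_sum_cellWeight_add_card_void
      _ = romanDomNum (G □ H) + B := by rw [sum_add_distrib, sum_sum_cellWeight hpU, hfw]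
  have hrows : 2 * B ≤ romanDomNum (G □ H) := hfw ▸ two_mul_sum_card_void_le hf hU hpU hp
  calc romanDomNum G * romanDomNum H ≤ 2 * #U * romanDomNum H :=
        Nat.mul_le_mul_right _ hUdom.romanDomNum_le_two_mul_card
    _ ≤ 3 * romanDomNum (G □ H) := by rw [mul_assoc]; omega

theorem stmt5 {V W : Type*} [Fintype V] [Fintype W]
    (G : SimpleGraph V) (H : SimpleGraph W) :
    (romanDomNum (G.boxProd H) : ℝ) ≥ (romanDomNum G : ℝ) * romanDomNum H / 3 := by
  rw [ge_iff_le, div_le_iff₀ three_pos]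
  exact_mod_cast (romanDomNum_mul_le G H).trans_eq (mul_comm _ _)
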